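/- arXiv:math/0311177 — 2 statements merged into one kernel-verified Lean document; each statement's English description precedes it below -/
import Mathlib

section
/- Let (W,S) and (W,S') be Coxeter systems for the same group W yielding the same reflections. Let s,t ∈ S with m := m(s,t) finite, and let s',t' ∈ S' and w ∈ W be such that w W_{{s,t}} w^{-1} = W_{{s',t'}}. Then, after possibly interchanging the roles of s' and t', there exist w' ∈ W with w' W_{{s,t}} w'^{-1} = W_{{s',t'}} and an integer j with 0 ≤ j ≤ ⌊(m−1)/4⌋ if m is even and 0 ≤ j ≤ (m−3)/2 if m is odd, such that w' s w'^{-1} = s' and w' t w'^{-1} = (t's')^{j} t' (s't')^{j}. In particular, if m ∈ {2,3,4} then w' can be chosen with w' s w'^{-1} = s' and w' t w'^{-1} = t'. -/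
/-!
After conjugation by `w`, the reflections `w s w⁻¹` and `w t w⁻¹` of `(W, S)` are reflections
of `(W, S')` lying in the dihedral group `D = W_{s',t'}`. The length parity of `(W, S')` is odd
on reflections and even on the rotations `(s't')^k`, so both have the form `s'(s't')^k`.
Conjugating by a rotation of `D` moves `w s w⁻¹` to `s'` or `t'`; call it `a` and the other
generator `b`, so that `w t w⁻¹ = a(ab)^d`. As these two reflections generate `D` again,
`b = a(ab)^(dk)` for some `k`: `d` is a unit modulo the order of `ab`, which divides `m(s,t)`.
Hence `d ≡ ±(2n+1)` for some `n` in the stated range; conjugating by `a` flips the sign, and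
`a(ab)^(2n+1) = (ba)^n b (ab)^n`.
-/

open CoxeterSystem

namespace CoxRigid

variable {B B' W : Type*}

def SameReflections [Group W] {M : CoxeterMatrix B} {M' : CoxeterMatrix B'}
    (cs : CoxeterSystem M W) (cs' : CoxeterSystem M' W) : Prop :=
  ∀ t : W, cs.IsReflection t ↔ cs'.IsReflection t

section Conjugation

variable {G : Type*} [Group G]

theorem image_conj_mul (g w : G) (S : Set G) :
    (fun x => g * w * x * (g * w)⁻¹) '' S
      = (fun x => g * x * g⁻¹) '' ((fun x => w * x * w⁻¹) '' S) := by
  rw [Set.image_image]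
  congr! 1 with x
  group

theorem image_conj_eq_self {H : Subgroup G} {g : G} (hg : g ∈ H) :
    (fun x => g * x * g⁻¹) '' (H : Set G) = H := by
  ext x
  refine ⟨?_, fun hx => ⟨g⁻¹ * x * g, ?_, by group⟩⟩
  · rintro ⟨y, hy, rfl⟩
    exact mul_mem (mul_mem hg hy) (inv_mem hg)
  · exact mul_mem (mul_mem (inv_mem hg) hx) hg

theorem image_conj_closure (w : G) (S : Set G) :
    (fun x => w * x * w⁻¹) '' (Subgroup.closure S : Set G)
      = Subgroup.closure ((fun x => w * x * w⁻¹) '' S) := by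
  have := congrArg SetLike.coe ((MulAut.conj w).toMonoidHom.map_closure S)
  rwa [Subgroup.coe_map] at this

end Conjugation

section NormalFormBound

def NormalFormBound (m n : ℕ) : Prop :=
  (Even m → n ≤ (m - 1) / 4) ∧ (Odd m → n ≤ (m - 3) / 2)

theorem NormalFormBound.eq_zero {m n : ℕ} (h : NormalFormBound m n) (hm : m ≤ 4) : n = 0 := by
  obtain ⟨heven, hodd⟩ := h
  rw [Nat.even_iff] at heven
  rw [Nat.odd_iff] at hodd
  omega

theorem NormalFormBound.of_dvd {m M n : ℕ} (h : NormalFormBound m n) (hmM : m ∣ M)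
    (hM : M ≠ 0) : NormalFormBound M n := by
  obtain ⟨c, rfl⟩ := hmM
  have hc : 1 ≤ c := Nat.one_le_iff_ne_zero.mpr (right_ne_zero_of_mul hM)
  have hle : m ≤ m * c := Nat.le_mul_of_pos_right m hc
  rcases Nat.even_or_odd m with hm | hm
  · have hn := h.1 hm
    exact ⟨fun _ => by omega,
      fun hodd => absurd (hm.mul_right c) (Nat.not_even_iff_odd.mpr hodd)⟩
  · have hn := h.2 hm
    refine ⟨fun heven => ?_, fun _ => by omega⟩
    obtain ⟨c', rfl⟩ := (Nat.even_mul.mp heven).resolve_left (Nat.not_even_iff_odd.mpr hm)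
    have hdouble : m * (c' + c') = 2 * (m * c') := by ring
    have : m ≤ m * c' := Nat.le_mul_of_pos_right m (by omega)
    omega

theorem exists_normalFormBound_modEq {m : ℕ} (hm : m ≠ 0) {d k : ℤ}
    (hdk : d * k ≡ 1 [ZMOD m]) :
    ∃ n : ℕ, NormalFormBound m n ∧
      (d ≡ 2 * n + 1 [ZMOD m] ∨ -d ≡ 2 * n + 1 [ZMOD m]) := by
  set r := d % m
  have hr_nonneg : 0 ≤ r := Int.emod_nonneg d (by omega)
  have hr_lt : r < m := Int.emod_lt_of_pos d (by omega)
  have hdr : d ≡ r [ZMOD m] := (Int.mod_modEq d m).symm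
  have hrk : r * k ≡ 1 [ZMOD m] := (hdr.mul_right k).symm.trans hdk
  have hr_odd : 2 ∣ (m : ℤ) → r % 2 = 1 := fun h2 =>
    Int.odd_iff.mp (Int.odd_mul.mp (Int.odd_iff.mpr (hrk.of_dvd h2))).1
  have hr_zero : r = 0 → m = 1 := fun h0 => by
    rw [h0, zero_mul, Int.modEq_iff_dvd, sub_zero] at hrk
    exact_mod_cast Int.eq_one_of_dvd_one (Int.natCast_nonneg m) hrk
  -- `2n + 1` is whichever of `r` and `m - r` is odd and, when `m` is even, at most `m / 2`.
  by_cases h : r % 2 = 1 ∧ (m % 2 = 1 ∨ 2 * r ≤ m)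
  · refine ⟨(r / 2).toNat, ?_, .inl (hdr.trans (by congr 1; omega))⟩
    rw [NormalFormBound, Nat.even_iff, Nat.odd_iff]
    omega
  · refine ⟨((m - r) / 2).toNat, ?_,
      .inr (hdr.neg.trans (Int.modEq_iff_dvd.mpr ⟨1, by omega⟩))⟩
    rw [NormalFormBound, Nat.even_iff, Nat.odd_iff]
    omega

end NormalFormBound

section Dihedral

variable {G : Type*} [Group G] {p q : G}

theorem zpow_mul_eq_mul_zpow_neg (hp : p * p = 1) (hq : q * q = 1) (k : ℤ) :
    (p * q) ^ k * p = p * (p * q) ^ (-k) := by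
  have hsemi : SemiconjBy p (p * q) (q * p) := by
    rw [SemiconjBy, ← mul_assoc, hp, one_mul, mul_assoc, hp, mul_one]
  have hinv : q * p = (p * q)⁻¹ := by
    rw [mul_inv_rev, inv_eq_of_mul_eq_one_right hp, inv_eq_of_mul_eq_one_right hq]
  rw [(hsemi.zpow_right (-k)).eq, hinv, inv_zpow', neg_neg]

theorem mem_closure_pair (hp : p * p = 1) (hq : q * q = 1) {x : G}
    (hx : x ∈ Subgroup.closure {p, q}) :
    (∃ k : ℤ, x = (p * q) ^ k) ∨ ∃ k : ℤ, x = p * (p * q) ^ k := by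
  have hp' : p⁻¹ = p := inv_eq_of_mul_eq_one_right hp
  have hq' : q⁻¹ = q := inv_eq_of_mul_eq_one_right hq
  have hmul : ∀ y ∈ ({p, q} : Set G), ∀ x : G,
      ((∃ k : ℤ, x = (p * q) ^ k) ∨ ∃ k : ℤ, x = p * (p * q) ^ k) →
      (∃ k : ℤ, y * x = (p * q) ^ k) ∨ ∃ k : ℤ, y * x = p * (p * q) ^ k := by
    rintro y (rfl | rfl) x (⟨k, rfl⟩ | ⟨k, rfl⟩)
    · exact .inr ⟨k, rfl⟩
    · exact .inl ⟨k, by rw [← mul_assoc, hp, one_mul]⟩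
    · exact .inr ⟨1 + k, by rw [zpow_one_add, ← mul_assoc, ← mul_assoc, hp, one_mul]⟩
    · exact .inl ⟨-1 + k, by rw [zpow_add, zpow_neg_one, mul_inv_rev, hp', hq', mul_assoc]⟩
  induction hx using Subgroup.closure_induction_left with
  | one => exact .inl ⟨0, by simp⟩
  | mul_left y hy x _ ih => exact hmul y hy x ih
  | inv_mul_cancel y hy x _ ih =>
    rcases hy with rfl | rfl
    · rw [hp']; exact hmul _ (.inl rfl) x ih
    · rw [hq']; exact hmul _ (.inr rfl) x ih

theorem exists_eq_mul_zpow_of_mem_closure (χ : G →* Multiplicative (ZMod 2))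
    (hp : p * p = 1) (hq : q * q = 1) (hχp : χ p ≠ 1) (hχq : χ q ≠ 1) {x : G}
    (hx : x ∈ Subgroup.closure {p, q}) (hχx : χ x ≠ 1) :
    ∃ k : ℤ, x = p * (p * q) ^ k := by
  refine (mem_closure_pair hp hq hx).resolve_left ?_
  rintro ⟨k, rfl⟩
  have hodd : ∀ a b : Multiplicative (ZMod 2), a ≠ 1 → b ≠ 1 → a * b = 1 := by decide
  rw [map_zpow, map_mul, hodd _ _ hχp hχq, one_zpow] at hχx
  exact hχx rfl

theorem mul_zpow_mul_self_eq_one (hp : p * p = 1) (hq : q * q = 1) (k : ℤ) :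
    p * (p * q) ^ k * (p * (p * q) ^ k) = 1 := by
  rw [← mul_assoc, mul_assoc p, zpow_mul_eq_mul_zpow_neg hp hq, ← mul_assoc, hp, one_mul,
    ← zpow_add, neg_add_cancel, zpow_zero]

theorem zpow_conj_mul_zpow (hp : p * p = 1) (hq : q * q = 1) (c k : ℤ) :
    (p * q) ^ c * (p * (p * q) ^ k) * ((p * q) ^ c)⁻¹ = p * (p * q) ^ (k - 2 * c) := by
  rw [← mul_assoc, zpow_mul_eq_mul_zpow_neg hp hq, ← zpow_neg, mul_assoc, mul_assoc,
    ← zpow_add, ← zpow_add]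
  congr 2
  ring

theorem exists_conj_eq_or_eq (hp : p * p = 1) (hq : q * q = 1) (k : ℤ) :
    ∃ g ∈ Subgroup.closure {p, q},
      g * (p * (p * q) ^ k) * g⁻¹ = p ∨ g * (p * (p * q) ^ k) * g⁻¹ = q := by
  have hpq : p * q ∈ Subgroup.closure {p, q} :=
    mul_mem (Subgroup.subset_closure (.inl rfl)) (Subgroup.subset_closure (.inr rfl))
  obtain ⟨c, rfl | rfl⟩ := Int.even_or_odd' k
  · exact ⟨(p * q) ^ c, zpow_mem hpq c, .inl (by
      rw [zpow_conj_mul_zpow hp hq, sub_self, zpow_zero, mul_one])⟩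
  · exact ⟨(p * q) ^ c, zpow_mem hpq c, .inr (by
      rw [zpow_conj_mul_zpow hp hq, add_sub_cancel_left, zpow_one, ← mul_assoc, hp, one_mul])⟩

theorem pow_mul_mul_pow_eq_mul_zpow (hp : p * p = 1) (hq : q * q = 1) (n : ℕ) :
    (q * p) ^ n * q * (p * q) ^ n = p * (p * q) ^ (2 * n + 1 : ℤ) := by
  have hinv : q * p = (p * q)⁻¹ := by
    rw [mul_inv_rev, inv_eq_of_mul_eq_one_right hp, inv_eq_of_mul_eq_one_right hq]
  have hzq : (p * q) ^ (-n : ℤ) * q = p * (p * q) ^ (1 + n : ℤ) := by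
    calc (p * q) ^ (-n : ℤ) * q = (p * q) ^ (-n : ℤ) * p * (p * q) := by
          rw [mul_assoc _ p, ← mul_assoc p, hp, one_mul]
      _ = p * (p * q) ^ (1 + n : ℤ) := by
          rw [zpow_mul_eq_mul_zpow_neg hp hq, neg_neg, mul_assoc, ← zpow_add_one, add_comm]
  rw [hinv, inv_pow, ← zpow_natCast, ← zpow_neg, hzq, mul_assoc, ← zpow_add]
  congr 2
  ring

theorem exists_mul_modEq_one_of_closure_eq (χ : G →* Multiplicative (ZMod 2))
    (hp : p * p = 1) (hq : q * q = 1) (hχp : χ p ≠ 1) (hχq : χ q ≠ 1) {d : ℤ}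
    (hχv : χ (p * (p * q) ^ d) ≠ 1)
    (hpv : Subgroup.closure {p, p * (p * q) ^ d} = Subgroup.closure {p, q}) :
    ∃ k : ℤ, d * k ≡ 1 [ZMOD orderOf (p * q)] := by
  have hq_mem : q ∈ Subgroup.closure {p, p * (p * q) ^ d} :=
    hpv ▸ Subgroup.subset_closure (.inr rfl)
  obtain ⟨k, hk⟩ := exists_eq_mul_zpow_of_mem_closure χ hp (mul_zpow_mul_self_eq_one hp hq d)
    hχp hχv hq_mem hχq
  rw [← mul_assoc p p, hp, one_mul, ← zpow_mul] at hk
  refine ⟨k, zpow_eq_zpow_iff_modEq.mp ?_⟩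
  calc (p * q) ^ (d * k) = p * (p * (p * q) ^ (d * k)) := by rw [← mul_assoc, hp, one_mul]
    _ = (p * q) ^ (1 : ℤ) := by rw [← hk, zpow_one]

theorem exists_conj_normal_form (χ : G →* Multiplicative (ZMod 2)) (hp : p * p = 1)
    (hq : q * q = 1) (hχp : χ p ≠ 1) (hχq : χ q ≠ 1) {v : G} (hχv : χ v ≠ 1)
    (hpv : Subgroup.closure {p, v} = Subgroup.closure {p, q}) {M : ℕ} (hM : M ≠ 0)
    (hpvM : (p * v) ^ M = 1) :
    ∃ g ∈ Subgroup.closure {p, q}, g * p * g⁻¹ = p ∧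
      ∃ n : ℕ, NormalFormBound M n ∧ g * v * g⁻¹ = (q * p) ^ n * q * (p * q) ^ n := by
  have hv_mem : v ∈ Subgroup.closure {p, q} := hpv ▸ Subgroup.subset_closure (.inr rfl)
  obtain ⟨d, rfl⟩ := exists_eq_mul_zpow_of_mem_closure χ hp hq hχp hχq hv_mem hχv
  obtain ⟨k, hdk⟩ := exists_mul_modEq_one_of_closure_eq χ hp hq hχp hχq hχv hpv
  have hp_mul_v : p * (p * (p * q) ^ d) = (p * q) ^ d := by rw [← mul_assoc, hp, one_mul]
  have hdvd : orderOf (p * q) ∣ M := by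
    rw [hp_mul_v] at hpvM
    refine orderOf_dvd_of_pow_eq_one ?_
    rw [← zpow_one (p * q), ← zpow_eq_zpow_iff_modEq.mpr hdk, zpow_mul, ← zpow_natCast,
      zpow_comm, zpow_natCast, hpvM, one_zpow]
  obtain ⟨n, hn, hplus | hminus⟩ := exists_normalFormBound_modEq
    (ne_zero_of_dvd_ne_zero hM hdvd) hdk
  · refine ⟨1, one_mem _, by simp, n, hn.of_dvd hdvd hM, ?_⟩
    rw [pow_mul_mul_pow_eq_mul_zpow hp hq, zpow_eq_zpow_iff_modEq.mpr hplus]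
    simp
  · refine ⟨p, Subgroup.subset_closure (.inl rfl), mul_inv_cancel_right p p, n,
      hn.of_dvd hdvd hM, ?_⟩
    rw [hp_mul_v, inv_eq_of_mul_eq_one_right hp, zpow_mul_eq_mul_zpow_neg hp hq,
      zpow_eq_zpow_iff_modEq.mpr hminus, pow_mul_mul_pow_eq_mul_zpow hp hq]

end Dihedral

section Coxeter

variable [Group W] {M : CoxeterMatrix B} {M' : CoxeterMatrix B'}

theorem lengthParity_ne_one_of_isReflection (cs : CoxeterSystem M W) {x : W}
    (hx : cs.IsReflection x) : cs.lengthParity x ≠ 1 := by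
  obtain ⟨w, i, rfl⟩ := hx
  simp [lengthParity_simple]

theorem SameReflections.isReflection_conj_simple {cs : CoxeterSystem M W}
    {cs' : CoxeterSystem M' W} (href : SameReflections cs cs') (w : W) (i : B) :
    cs'.IsReflection (w * cs.simple i * w⁻¹) :=
  (href _).mp ((cs.isReflection_simple i).conj w)

theorem exists_conj_normal_form_of_conj_simple_eq (cs : CoxeterSystem M W)
    (cs' : CoxeterSystem M' W) (href : SameReflections cs cs') {i j : B} (hfin : M i j ≠ 0)
    {p q : W} (hp : cs'.IsReflection p) (hq : cs'.IsReflection q) {w : W}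
    (hw : (fun x => w * x * w⁻¹) ''
            ((Subgroup.closure {cs.simple i, cs.simple j} : Subgroup W) : Set W)
          = ((Subgroup.closure {p, q} : Subgroup W) : Set W))
    (hwp : w * cs.simple i * w⁻¹ = p) :
    ∃ w' : W,
      (fun x => w' * x * w'⁻¹) ''
          ((Subgroup.closure {cs.simple i, cs.simple j} : Subgroup W) : Set W)
        = ((Subgroup.closure {p, q} : Subgroup W) : Set W) ∧
      ∃ n : ℕ, NormalFormBound (M i j) n ∧ w' * cs.simple i * w'⁻¹ = p ∧
        w' * cs.simple j * w'⁻¹ = (q * p) ^ n * q * (p * q) ^ n := by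
  have hpv : Subgroup.closure {p, w * cs.simple j * w⁻¹} = Subgroup.closure {p, q} := by
    apply SetLike.coe_injective
    rw [← hw, image_conj_closure, Set.image_pair, hwp]
  have hpvM : (p * (w * cs.simple j * w⁻¹)) ^ M i j = 1 := by
    rw [← hwp, conj_mul, conj_pow, cs.simple_mul_simple_pow, mul_one, mul_inv_cancel]
  obtain ⟨g, hg, hgp, n, hn, hgv⟩ := exists_conj_normal_form cs'.lengthParity hp.mul_self
    hq.mul_self (lengthParity_ne_one_of_isReflection cs' hp)
    (lengthParity_ne_one_of_isReflection cs' hq)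
    (lengthParity_ne_one_of_isReflection cs' (href.isReflection_conj_simple w j)) hpv hfin hpvM
  refine ⟨g * w, by rw [image_conj_mul, hw, image_conj_eq_self hg], n, hn, ?_, ?_⟩
  · rw [← hgp, ← hwp]; group
  · rw [← hgv]; group

theorem exists_conj_normal_form_of_conj_closure (cs : CoxeterSystem M W)
    (cs' : CoxeterSystem M' W) (href : SameReflections cs cs') {i j : B} (hfin : M i j ≠ 0)
    {p q : W} (hp : cs'.IsReflection p) (hq : cs'.IsReflection q) (w : W)
    (hw : (fun x => w * x * w⁻¹) ''
            ((Subgroup.closure {cs.simple i, cs.simple j} : Subgroup W) : Set W)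
          = ((Subgroup.closure {p, q} : Subgroup W) : Set W)) :
    ∃ a b : W, ({a, b} : Set W) = {p, q} ∧ ∃ w' : W,
      (fun x => w' * x * w'⁻¹) ''
          ((Subgroup.closure {cs.simple i, cs.simple j} : Subgroup W) : Set W)
        = ((Subgroup.closure {p, q} : Subgroup W) : Set W) ∧
      ∃ n : ℕ, NormalFormBound (M i j) n ∧ w' * cs.simple i * w'⁻¹ = a ∧
        w' * cs.simple j * w'⁻¹ = (b * a) ^ n * b * (a * b) ^ n := by
  have hu_mem : w * cs.simple i * w⁻¹ ∈ Subgroup.closure {p, q} := by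
    rw [← SetLike.mem_coe, ← hw]
    exact ⟨_, Subgroup.subset_closure (.inl rfl), rfl⟩
  obtain ⟨k, hk⟩ := exists_eq_mul_zpow_of_mem_closure cs'.lengthParity hp.mul_self hq.mul_self
    (lengthParity_ne_one_of_isReflection cs' hp) (lengthParity_ne_one_of_isReflection cs' hq)
    hu_mem (lengthParity_ne_one_of_isReflection cs' (href.isReflection_conj_simple w i))
  obtain ⟨g, hg, hgu⟩ := exists_conj_eq_or_eq hp.mul_self hq.mul_self k
  rw [← hk] at hgu
  have hgw : (fun x => g * w * x * (g * w)⁻¹) ''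
      ((Subgroup.closure {cs.simple i, cs.simple j} : Subgroup W) : Set W)
        = ((Subgroup.closure {p, q} : Subgroup W) : Set W) := by
    rw [image_conj_mul, hw, image_conj_eq_self hg]
  rcases hgu with hgu | hgu
  · exact ⟨p, q, rfl, exists_conj_normal_form_of_conj_simple_eq cs cs' href hfin hp hq hgw
      (by rw [← hgu]; group)⟩
  · rw [Set.pair_comm p q] at hgw ⊢
    exact ⟨q, p, rfl, exists_conj_normal_form_of_conj_simple_eq cs cs' href hfin hq hp hgw
      (by rw [← hgu]; group)⟩

end Coxeter

theorem dihedral_conjugation_normal_form_general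
    [Group W] {M : CoxeterMatrix B} {M' : CoxeterMatrix B'}
    (cs : CoxeterSystem M W) (cs' : CoxeterSystem M' W)
    (href : SameReflections cs cs')
    {i j : B} (hfin : M i j ≠ 0)
    {i' j' : B'} (w : W)
    (hw : (fun x => w * x * w⁻¹) ''
            ((Subgroup.closure {cs.simple i, cs.simple j} : Subgroup W) : Set W)
          = ((Subgroup.closure {cs'.simple i', cs'.simple j'} : Subgroup W) : Set W)) :
    (∃ a b : W, ({a, b} : Set W) = {cs'.simple i', cs'.simple j'} ∧
      ∃ w' : W,
        (fun x => w' * x * w'⁻¹) ''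
            ((Subgroup.closure {cs.simple i, cs.simple j} : Subgroup W) : Set W)
          = ((Subgroup.closure {cs'.simple i', cs'.simple j'} : Subgroup W) : Set W) ∧
        ∃ n : ℕ,
          (Even (M i j) → n ≤ (M i j - 1) / 4) ∧
          (Odd (M i j) → n ≤ (M i j - 3) / 2) ∧
          w' * cs.simple i * w'⁻¹ = a ∧
          w' * cs.simple j * w'⁻¹ = (b * a) ^ n * b * (a * b) ^ n) ∧
    (M i j = 2 ∨ M i j = 3 ∨ M i j = 4 →
      ∃ a b : W, ({a, b} : Set W) = {cs'.simple i', cs'.simple j'} ∧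
        ∃ w' : W, w' * cs.simple i * w'⁻¹ = a ∧ w' * cs.simple j * w'⁻¹ = b) := by
  obtain ⟨a, b, hab, w', hw', n, hn, ha, hb⟩ := exists_conj_normal_form_of_conj_closure cs cs'
    href hfin (cs'.isReflection_simple i') (cs'.isReflection_simple j') w hw
  refine ⟨⟨a, b, hab, w', hw', n, hn.1, hn.2, ha, hb⟩,
    fun hm => ⟨a, b, hab, w', ha, ?_⟩⟩
  rw [hb, hn.eq_zero (by omega)]
  simp

/-- **Lemma.** Suppose `(W,S)` and `(W,S')` yield the same reflections, `m = m(s,t) < ∞`,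
and `w W_{{s,t}} w⁻¹ = W_{{s',t'}}`.  Then, after possibly interchanging `s'` and `t'`
(the pair `{a, b}` below), there is a `w'` conjugating `W_{{s,t}}` onto `W_{{s',t'}}`
with `w' s w'⁻¹ = a` and `w' t w'⁻¹ = (ba)^j b (ab)^j` for some
`0 ≤ j ≤ ⌊(m-1)/4⌋` (`m` even) resp. `0 ≤ j ≤ (m-3)/2` (`m` odd).  In particular, for
`m ∈ {2,3,4}` one can take `w' s w'⁻¹ = a` and `w' t w'⁻¹ = b`. -/
theorem dihedral_conjugation_normal_form
    [Group W] {M : CoxeterMatrix B} {M' : CoxeterMatrix B'}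
    (cs : CoxeterSystem M W) (cs' : CoxeterSystem M' W)
    (href : SameReflections cs cs')
    {i j : B} (hij : i ≠ j) (hfin : M i j ≠ 0)
    {i' j' : B'} (w : W)
    (hw : (fun x => w * x * w⁻¹) ''
            ((Subgroup.closure {cs.simple i, cs.simple j} : Subgroup W) : Set W)
          = ((Subgroup.closure {cs'.simple i', cs'.simple j'} : Subgroup W) : Set W)) :
    (∃ a b : W, ({a, b} : Set W) = {cs'.simple i', cs'.simple j'} ∧
      ∃ w' : W,
        (fun x => w' * x * w'⁻¹) ''
            ((Subgroup.closure {cs.simple i, cs.simple j} : Subgroup W) : Set W)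
          = ((Subgroup.closure {cs'.simple i', cs'.simple j'} : Subgroup W) : Set W) ∧
        ∃ n : ℕ,
          (Even (M i j) → n ≤ (M i j - 1) / 4) ∧
          (Odd (M i j) → n ≤ (M i j - 3) / 2) ∧
          w' * cs.simple i * w'⁻¹ = a ∧
          w' * cs.simple j * w'⁻¹ = (b * a) ^ n * b * (a * b) ^ n) ∧
    (M i j = 2 ∨ M i j = 3 ∨ M i j = 4 →
      ∃ a b : W, ({a, b} : Set W) = {cs'.simple i', cs'.simple j'} ∧
        ∃ w' : W, w' * cs.simple i * w'⁻¹ = a ∧ w' * cs.simple j * w'⁻¹ = b) :=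
  dihedral_conjugation_normal_form_general cs cs' href hfin w hw

end CoxRigid
end

section
/- Let W be the Coxeter group of type Ã₂, i.e., the group with Coxeter system (W,{p,q,r}) where m(p,q) = m(q,r) = m(p,r) = 3. Then the subgroup of W generated by {p, q, r p q p r} is a proper subgroup of W. -/
open CoxeterSystem

namespace CoxRigid

/-- The Coxeter matrix of affine type Ã₂: three generators, all pairwise orders equal to 3. -/
def A2affine : CoxeterMatrix (Fin 3) where
  M := Matrix.of fun i j => if i = j then 1 else 3
  isSymm := by
    ext i j
    by_cases h : i = j <;> simp [Matrix.transpose_apply, h, eq_comm]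
  diagonal i := by simp
  off_diagonal i j h := by simp [h]

theorem closure_ne_top_of_smul_eq {G H α : Type*} [Group G] [Group H] [MulAction H α]
    (f : G →* H) {s : Set G} {a : α} (hs : ∀ x ∈ s, f x • a = a) {g : G} (hg : f g • a ≠ a) :
    Subgroup.closure s ≠ ⊤ := by
  intro htop
  have hle : Subgroup.closure s ≤ (MulAction.stabilizer H a).comap f :=
    (Subgroup.closure_le _).mpr hs
  exact hg (hle (htop ▸ Subgroup.mem_top g))

abbrev Plane := ZMod 2 × ZMod 2

/- The affine Weyl group of type Ã₂ acting on the coroot lattice `ℤ²`, reduced mod 2: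
`p` and `q` act linearly, while `r` is the affine reflection that moves the origin; so `p`, `q`
and `r p q p r` fix the origin but `r` does not. -/
def planeAction : Fin 3 → Equiv.Perm Plane :=
  ![Function.Involutive.toPerm (fun x => (x.1 + x.2, x.2)) (by unfold Function.Involutive; decide),
    Function.Involutive.toPerm (fun x => (x.1, x.1 + x.2)) (by unfold Function.Involutive; decide),
    Function.Involutive.toPerm (fun x => (x.2 + 1, x.1 + 1)) (by unfold Function.Involutive; decide)]

theorem isLiftable_planeAction : A2affine.IsLiftable planeAction := by
  unfold CoxeterMatrix.IsLiftable
  decide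

/-- **Lemma.** In the Coxeter group `W` of type Ã₂ with fundamental generators `p, q, r`,
the subgroup generated by `{p, q, r p q p r}` is proper (`W` of type Ã₂ is not cohopfian). -/
theorem A2affine_proper_subgroup {W : Type*} [Group W] (cs : CoxeterSystem A2affine W) :
    Subgroup.closure {cs.simple 0, cs.simple 1,
        cs.simple 2 * cs.simple 0 * cs.simple 1 * cs.simple 0 * cs.simple 2} ≠ ⊤ := by
  have hsimple := cs.lift_apply_simple isLiftable_planeAction
  refine closure_ne_top_of_smul_eq (cs.lift ⟨_, isLiftable_planeAction⟩) (a := (0 : Plane))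
    (g := cs.simple 2) ?_ ?_
  · rintro x (rfl | rfl | rfl) <;> simp only [map_mul, hsimple] <;> decide
  · rw [hsimple]
    decide

end CoxRigid
end
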